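/- arXiv:math/0005278 — 3 statements merged into one kernel-verified Lean document; each statement's English description precedes it below -/
import Mathlib

section
/- Let X be a Banach space with the Daugavet property and Y a rich subspace, i.e., the quotient map q : X → X/Y is a narrow operator. Then Y has the Daugavet property; moreover the pair (Y,X) is a Daugavet pair, meaning ‖J + T‖ = 1 + ‖T‖ for every rank-one operator T : Y → X, where J : Y → X is the inclusion. -/
set_option synthInstance.maxHeartbeats 1000000
set_option maxHeartbeats 1000000

/-- Key lemma: the narrowness of the quotient map gives the Daugavet equation for
rank-one operators `T : Y → X` against the inclusion. -/
lemma aux_key_16 {X : Type*} [NormedAddCommGroup X] [NormedSpace ℝ X]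
    (Y : Submodule ℝ X)
    (hnarrow : ∀ f : X →L[ℝ] ℝ, ∀ x y : X, ‖x‖ = 1 → ‖y‖ = 1 → ∀ ε > (0 : ℝ),
      ∃ z : X, ‖z‖ = 1 ∧
        ‖(Submodule.Quotient.mk (z - y) : X ⧸ Y)‖ + |f (z - y)| < ε ∧ 2 - ε < ‖z + x‖)
    (T : Y →L[ℝ] X) (hT : Module.finrank ℝ (LinearMap.range (T : Y →ₗ[ℝ] X)) = 1) :
    ‖Y.subtypeL + T‖ = 1 + ‖T‖ := by
  have hT0 : T ≠ 0 := by
    rintro rfl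
    have h0 : LinearMap.range ((0 : Y →L[ℝ] X) : Y →ₗ[ℝ] X) = ⊥ := LinearMap.range_eq_bot.mpr rfl
    rw [h0] at hT
    simp at hT
  have hTpos : (0 : ℝ) < ‖T‖ :=
    lt_of_le_of_ne (norm_nonneg T) fun h => hT0 (T.opNorm_zero_iff.mp h.symm)
  -- rank one structure
  haveI : Module.Free ℝ ↥(LinearMap.range (T : Y →ₗ[ℝ] X)) := Module.Free.of_divisionRing ℝ _
  obtain ⟨v, hv0, hv⟩ := finrank_eq_one_iff'.mp hT
  set e0 : X := (v : X) with he0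
  have he00 : e0 ≠ 0 := by
    simpa [he0, Submodule.coe_eq_zero] using hv0
  have he0n : (0:ℝ) < ‖e0‖ := norm_pos_iff.2 he00
  set e : X := ‖e0‖⁻¹ • e0 with he
  have hen : ‖e‖ = 1 := by
    rw [he, norm_smul, norm_inv, norm_norm, inv_mul_cancel₀ he0n.ne']
  have hene : e ≠ 0 := by
    intro h; rw [h, norm_zero] at hen; norm_num at hen
  obtain ⟨g, hg1, hge⟩ := exists_dual_vector ℝ e (norm_ne_zero_iff.mpr hene)
  have hge' : g e = 1 := by rw [hge, hen]; norm_num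
  -- every element of the range is `g u • e`
  have hrep : ∀ w : Y, T w = g (T w) • e := by
    intro w
    obtain ⟨c, hc⟩ := hv ⟨T w, LinearMap.mem_range_self (T : Y →ₗ[ℝ] X) w⟩
    have hc' : T w = c • e0 := by
      have := congrArg (Subtype.val) hc
      simpa [he0] using this.symm
    have hge0 : g e0 = ‖e0‖ := by
      have h2 : ‖e0‖⁻¹ * g e0 = 1 := by
        rw [← smul_eq_mul, ← map_smul, ← he, hge']
      field_simp at h2
      linarith
    rw [hc', map_smul, smul_eq_mul, hge0, he, smul_smul, mul_assoc,
      mul_inv_cancel₀ he0n.ne', mul_one]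
  -- extend `g ∘ T` to a functional on `X`
  obtain ⟨F, hF, hFn⟩ := exists_extension_norm_eq Y (g.comp T)
  -- upper bound
  have hub : ‖Y.subtypeL + T‖ ≤ 1 + ‖T‖ :=
    le_trans (ContinuousLinearMap.opNorm_add_le _ _) (by
      have := Submodule.norm_subtypeL_le Y
      linarith)
  refine le_antisymm hub ?_
  -- lower bound: `1 + ‖T‖ ≤ ‖J + T‖ + δ` for every `δ > 0`
  refine le_of_forall_pos_le_add ?_
  intro δ hδ
  set K : ℝ := 5 + 2 * ‖T‖ + ‖F‖ with hK
  have hKpos : (0:ℝ) < K := by positivity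
  set ε : ℝ := min (δ / K) ‖T‖ with hε
  have hεpos : (0:ℝ) < ε := lt_min (div_pos hδ hKpos) hTpos
  have hεT : ε ≤ ‖T‖ := min_le_right _ _
  have hεδ : K * ε ≤ δ := by
    calc K * ε ≤ K * (δ / K) := by
          exact mul_le_mul_of_nonneg_left (min_le_left _ _) hKpos.le
      _ = δ := by field_simp
  -- choose `y ∈ Y` almost norming `T`
  obtain ⟨y0, hy0, hy0T⟩ := T.exists_lt_apply_of_lt_opNorm (show ‖T‖ - ε < ‖T‖ by linarith)
  have hTy0 : T y0 ≠ 0 := by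
    intro h; rw [h, norm_zero] at hy0T; linarith
  have hy00 : y0 ≠ 0 := by rintro rfl; simp at hTy0
  have hy0n : (0:ℝ) < ‖y0‖ := norm_pos_iff.2 hy00
  set y : Y := ‖y0‖⁻¹ • y0 with hy
  have hyn : ‖y‖ = 1 := by
    rw [hy, norm_smul, norm_inv, norm_norm, inv_mul_cancel₀ hy0n.ne']
  have hTy : ‖T‖ - ε < ‖T y‖ := by
    rw [hy, map_smul, norm_smul, norm_inv, norm_norm]
    have h1 : (1:ℝ) ≤ ‖y0‖⁻¹ := (one_le_inv₀ hy0n).mpr hy0.le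
    nlinarith [norm_nonneg (T y0)]
  have hrn : (0:ℝ) < ‖T y‖ := by linarith
  have hTyne : T y ≠ 0 := norm_pos_iff.mp hrn
  have hrT : ‖T y‖ ≤ ‖T‖ := by
    have := T.le_opNorm y
    rw [hyn, mul_one] at this
    exact this
  set x : X := ‖T y‖⁻¹ • T y with hx
  have hxn : ‖x‖ = 1 := by
    rw [hx, norm_smul, norm_inv, norm_norm, inv_mul_cancel₀ hrn.ne']
  have hxTy : T y = ‖T y‖ • x := by
    rw [hx, smul_smul, mul_inv_cancel₀ hrn.ne', one_smul]
  have hynX : ‖(y : X)‖ = 1 := hyn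
  obtain ⟨z, hz1, hz2, hz3⟩ := hnarrow F x (y : X) hxn hynX ε hεpos
  have hqnn : (0:ℝ) ≤ ‖(Submodule.Quotient.mk (z - (y:X)) : X ⧸ Y)‖ := norm_nonneg _
  have hFzy : |F (z - (y:X))| < ε := by linarith
  have hqlt : (0:ℝ) < ε - ‖(Submodule.Quotient.mk (z - (y:X)) : X ⧸ Y)‖ := by
    have := abs_nonneg (F (z - (y:X))); linarith
  obtain ⟨m, hm1, hm2⟩ := Submodule.Quotient.norm_mk_lt
      (Submodule.Quotient.mk (z - (y:X)) : X ⧸ Y) hqlt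
  have hm2' : ‖m‖ < ε := by linarith
  set w : X := z - m with hw
  have hwY : w ∈ Y := by
    have h3 : m - (z - (y:X)) ∈ Y := (Submodule.Quotient.eq Y).mp hm1
    have h4 : (z - m) - (y:X) = -(m - (z - (y:X))) := by abel
    have h5 : (z - m) - (y:X) ∈ Y := by rw [h4]; exact Y.neg_mem h3
    have h6 := Y.add_mem h5 y.2
    have h7 : ((z - m) - (y:X)) + (y:X) = z - m := by abel
    rw [h7] at h6
    exact h6
  set u : Y := ⟨w, hwY⟩ with hu
  have hwz : ‖w - z‖ < ε := by
    have : w - z = -m := by rw [hw]; abel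
    rw [this, norm_neg]; exact hm2'
  -- estimate A : ‖z + T y‖ is large
  have hA : 1 + ‖T y‖ - (1 + ‖T‖) * ε < ‖z + T y‖ := by
    rw [show z + T y = z + ‖T y‖ • x from by rw [← hxTy]]
    set r : ℝ := ‖T y‖ with hr
    rcases le_or_gt r 1 with hr1 | hr1
    · have heq : z + x = (z + r • x) + (1 - r) • x := by module
      have h8 : ‖z + x‖ ≤ ‖z + r • x‖ + ‖(1 - r) • x‖ := by
        rw [heq]; exact norm_add_le _ _
      rw [norm_smul, hxn, mul_one, Real.norm_eq_abs, abs_of_nonneg (by linarith)] at h8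
      nlinarith [mul_nonneg hTpos.le hεpos.le]
    · have heq : z + r • x = r • (z + x) - (r - 1) • z := by module
      have h8 : ‖r • (z + x)‖ - ‖(r - 1) • z‖ ≤ ‖z + r • x‖ := by
        rw [heq]; exact norm_sub_norm_le _ _
      rw [norm_smul, norm_smul, hz1, mul_one, Real.norm_eq_abs, Real.norm_eq_abs,
        abs_of_nonneg (by linarith : (0:ℝ) ≤ r), abs_of_nonneg (by linarith : (0:ℝ) ≤ r - 1)] at h8
      nlinarith [mul_nonneg (by linarith : (0:ℝ) ≤ 1 + ‖T‖ - r) hεpos.le]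
  -- estimate B : T u is close to T y
  have hFu : F w = g (T u) := hF u
  have hFy : F ((y:X)) = g (T y) := hF y
  have hB : ‖T u - T y‖ ≤ ‖F‖ * ε + ε := by
    have h1 : T u - T y = g (T u - T y) • e := by
      rw [map_sub, sub_smul]
      conv_lhs => rw [hrep u, hrep y]
      
    have h2 : g (T u) - g (T y) = F (w - z) + F (z - (y:X)) := by
      rw [map_sub, map_sub, ← hFu, ← hFy, hw, map_sub, map_sub]; ring
    have h3 : |F (w - z)| ≤ ‖F‖ * ‖w - z‖ := by
      rw [← Real.norm_eq_abs]; exact F.le_opNorm _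
    calc ‖T u - T y‖ = |g (T u) - g (T y)| := by
          rw [h1, norm_smul, hen, mul_one, Real.norm_eq_abs, map_sub]
      _ = |F (w - z) + F (z - (y:X))| := by rw [h2]
      _ ≤ |F (w - z)| + |F (z - (y:X))| := abs_add_le _ _
      _ ≤ ‖F‖ * ε + ε := by
          have h5 : (0:ℝ) ≤ ‖F‖ := norm_nonneg F
          nlinarith
  -- norm of u
  have hun : ‖u‖ < 1 + ε := by
    have h1 : ‖u‖ = ‖w‖ := rfl
    have h3 : ‖w‖ - ‖z‖ ≤ ‖w - z‖ := norm_sub_norm_le w z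
    rw [h1, ← hz1]
    linarith
  -- estimate C : the image of u under J + T is large
  have happ : (Y.subtypeL + T) u = w + T u := by
    rw [ContinuousLinearMap.add_apply]; rfl
  have hC : 1 + ‖T‖ - (4 + ‖T‖ + ‖F‖) * ε < ‖(Y.subtypeL + T) u‖ := by
    rw [happ]
    have hsplit : w + T u = (z + T y) + ((w - z) + (T u - T y)) := by abel
    have h1 : ‖z + T y‖ - ‖(w - z) + (T u - T y)‖ ≤ ‖w + T u‖ := by
      calc ‖z + T y‖ - ‖(w - z) + (T u - T y)‖
          ≤ ‖(z + T y) + ((w - z) + (T u - T y))‖ := by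
            have := norm_add_le ((z + T y) + ((w - z) + (T u - T y)))
              (-((w - z) + (T u - T y)))
            simp only [add_neg_cancel_right, norm_neg] at this
            linarith
        _ = ‖w + T u‖ := by rw [← hsplit]
    have h2 : ‖(w - z) + (T u - T y)‖ ≤ ‖w - z‖ + ‖T u - T y‖ := norm_add_le _ _
    have e1 : (4 + ‖T‖ + ‖F‖) * ε = 4 * ε + ‖T‖ * ε + ‖F‖ * ε := by ring
    have e2 : (1 + ‖T‖) * ε = ε + ‖T‖ * ε := by ring
    linarith
  -- combine
  have hE : ‖(Y.subtypeL + T) u‖ ≤ ‖Y.subtypeL + T‖ * ‖u‖ :=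
    ContinuousLinearMap.le_opNorm (Y.subtypeL + T) u
  have hJTnn : (0:ℝ) ≤ ‖Y.subtypeL + T‖ := ContinuousLinearMap.opNorm_nonneg _
  have hfinal : 1 + ‖T‖ ≤ ‖Y.subtypeL + T‖ + K * ε := by
    have h1 : ‖Y.subtypeL + T‖ * ‖u‖ ≤ ‖Y.subtypeL + T‖ * (1 + ε) :=
      mul_le_mul_of_nonneg_left hun.le hJTnn
    have h2 : ‖Y.subtypeL + T‖ * (1 + ε) ≤ ‖Y.subtypeL + T‖ + (1 + ‖T‖) * ε := by
      have h3 : ‖Y.subtypeL + T‖ * ε ≤ (1 + ‖T‖) * ε :=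
        mul_le_mul_of_nonneg_right hub hεpos.le
      have h4 : ‖Y.subtypeL + T‖ * (1 + ε) = ‖Y.subtypeL + T‖ + ‖Y.subtypeL + T‖ * ε := by ring
      linarith
    have e1 : (4 + ‖T‖ + ‖F‖) * ε = 4 * ε + ‖T‖ * ε + ‖F‖ * ε := by ring
    have e2 : (1 + ‖T‖) * ε = ε + ‖T‖ * ε := by ring
    have e3 : (5 + 2 * ‖T‖ + ‖F‖) * ε = 5 * ε + 2 * (‖T‖ * ε) + ‖F‖ * ε := by ring
    rw [hK]
    linarith
  linarith

/-- `E` has the Daugavet property: every rank-one operator satisfies the Daugavet equation. -/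
def DaugavetPt (E : Type*) [NormedAddCommGroup E] [NormedSpace ℝ E] : Prop :=
  ∀ T : E →L[ℝ] E, Module.finrank ℝ (LinearMap.range (T : E →ₗ[ℝ] E)) = 1 →
    ‖ContinuousLinearMap.id ℝ E + T‖ = 1 + ‖T‖

/-- If `X` has the Daugavet property and `Y` is a rich subspace (i.e. the quotient map
`q : X → X/Y` is narrow: for every `x* ∈ X*`, `q +̃ x*` is a strong Daugavet operator),
then `Y` has the Daugavet property, and moreover `(Y, X)` is a Daugavet pair:
`‖J + T‖ = 1 + ‖T‖` for every rank-one `T : Y → X`, `J` the inclusion. -/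
theorem stmt_16 {X : Type*} [NormedAddCommGroup X] [NormedSpace ℝ X] [CompleteSpace X]
    (hX : DaugavetPt X) (Y : Submodule ℝ X) [IsClosed (Y : Set X)]
    (hnarrow : ∀ f : X →L[ℝ] ℝ, ∀ x y : X, ‖x‖ = 1 → ‖y‖ = 1 → ∀ ε > (0 : ℝ),
      ∃ z : X, ‖z‖ = 1 ∧
        ‖(Submodule.Quotient.mk (z - y) : X ⧸ Y)‖ + |f (z - y)| < ε ∧ 2 - ε < ‖z + x‖) :
    DaugavetPt Y ∧
      ∀ T : Y →L[ℝ] X, Module.finrank ℝ (LinearMap.range (T : Y →ₗ[ℝ] X)) = 1 →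
        ‖Y.subtypeL + T‖ = 1 + ‖T‖ := by
  refine ⟨?_, fun T hT => aux_key_16 Y hnarrow T hT⟩
  intro S hS
  set S' : Y →L[ℝ] X := Y.subtypeL.comp S with hS'
  have hrange : Module.finrank ℝ (LinearMap.range (S' : Y →ₗ[ℝ] X)) = 1 := by
    have h1 : LinearMap.range (S' : Y →ₗ[ℝ] X) = (LinearMap.range (S : Y →ₗ[ℝ] Y)).map Y.subtype := by
      ext a
      simp only [LinearMap.mem_range, Submodule.mem_map]
      constructor
      · rintro ⟨b, rfl⟩
        exact ⟨S b, ⟨b, rfl⟩, rfl⟩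
      · rintro ⟨c, ⟨b, rfl⟩, rfl⟩
        exact ⟨b, rfl⟩
    rw [h1, Submodule.finrank_map_subtype_eq]
    exact hS
  have hkey := aux_key_16 Y hnarrow S' hrange
  have h2 : Y.subtypeL + S' = Y.subtypeL.comp (ContinuousLinearMap.id ℝ Y + S) := by
    ext a
    simp [hS']
  have h3 : ‖Y.subtypeL.comp (ContinuousLinearMap.id ℝ ↥Y + S)‖ =
      ‖ContinuousLinearMap.id ℝ ↥Y + S‖ := by
    rw [← Submodule.subtypeₗᵢ_toContinuousLinearMap]
    exact Y.subtypeₗᵢ.norm_toContinuousLinearMap_comp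
  have h4 : ‖S'‖ = ‖S‖ := by
    rw [hS', ← Submodule.subtypeₗᵢ_toContinuousLinearMap]
    exact Y.subtypeₗᵢ.norm_toContinuousLinearMap_comp
  rw [h2, h3, h4] at hkey
  exact hkey
end

section
/- Let X be a Banach space with the Daugavet property and Y a closed subspace such that the quotient map q₁ : X → X/Y₁ is a strong Daugavet operator for Y₁ = Y and also for every 1-codimensional closed subspace Y₁ of Y. Then for every x* ∈ X* the operator x ↦ ‖q(x)‖ + |x*(x)| is dominated (up to factor 2) by x ↦ 2‖q₁(x)‖ where Y₁ = Y ∩ ker x*, i.e., ‖q(x)‖ + |x*(x)| ≤ 2‖q₁(x)‖ for all x ∈ X; consequently q : X → X/Y is a narrow operator. -/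
/-- If a subspace lies in the kernel of `f`, then `|f w|` is bounded by `‖f‖` times the
distance from `w` to that subspace. -/
lemma abs_apply_le_norm_mul_infDist {X : Type*} [NormedAddCommGroup X] [NormedSpace ℝ X]
    (f : X →L[ℝ] ℝ) (s : Submodule ℝ X) (hs : s ≤ LinearMap.ker (f : X →ₗ[ℝ] ℝ)) (w : X) :
    |f w| ≤ ‖f‖ * Metric.infDist w (s : Set X) := by
  by_contra h
  push_neg at h
  have hfw : 0 < |f w| :=
    lt_of_le_of_lt (mul_nonneg (norm_nonneg f) Metric.infDist_nonneg) h
  have hf : 0 < ‖f‖ := by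
    by_contra hf0
    push_neg at hf0
    have : f = 0 := by
      ext x
      simpa using le_antisymm (le_trans (f.le_opNorm x)
        (by nlinarith [norm_nonneg x] : ‖f‖ * ‖x‖ ≤ 0)) (abs_nonneg _)
    simp [this] at hfw
  have hlt : Metric.infDist w (s : Set X) < |f w| / ‖f‖ := by
    rw [lt_div_iff₀ hf]
    nlinarith
  obtain ⟨v, hv, hdv⟩ := (Metric.infDist_lt_iff ⟨0, s.zero_mem⟩).1 hlt
  have hfv : f v = 0 := hs hv
  have : |f w| = |f (w - v)| := by simp [map_sub, hfv]
  have hle : |f w| ≤ ‖f‖ * dist w v := by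
    rw [this, dist_eq_norm]
    exact f.le_opNorm (w - v)
  have : ‖f‖ * dist w v < ‖f‖ * (|f w| / ‖f‖) := by
    exact mul_lt_mul_of_pos_left hdv hf
  rw [mul_div_cancel₀ _ (ne_of_gt hf)] at this
  linarith

/-- Let `X` have the Daugavet property and `Y` be a closed subspace such that the quotient
map `X → X/Y₁` is a strong Daugavet operator for `Y₁ = Y` and for every closed
`1`-codimensional subspace `Y₁` of `Y` (quotient norms are expressed via the distance to the
subspace). Then for every norm-one `x* ∈ X*` one has
`‖q x‖ + |x* x| ≤ 2 ‖q₁ x‖` where `Y₁ = Y ∩ ker x*`, and consequently the quotient map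
`q : X → X/Y` is narrow. -/
theorem stmt_17 {X : Type*} [NormedAddCommGroup X] [NormedSpace ℝ X] [CompleteSpace X]
    (hX : DaugavetPt X) (Y : Submodule ℝ X) (hYc : IsClosed (Y : Set X))
    (hq : ∀ Y₁ : Submodule ℝ X, Y₁ ≤ Y → IsClosed (Y₁ : Set X) →
      (Y₁ = Y ∨ ∃ v ∈ Y, v ∉ Y₁ ∧ Y ≤ Y₁ ⊔ Submodule.span ℝ {v}) →
      ∀ x y : X, ‖x‖ = 1 → ‖y‖ = 1 → ∀ ε > (0 : ℝ),
        ∃ z : X, ‖z‖ = 1 ∧ Metric.infDist (z - y) (Y₁ : Set X) < ε ∧ 2 - ε < ‖z + x‖) :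
    (∀ f : X →L[ℝ] ℝ, ‖f‖ = 1 → ∀ x : X,
        Metric.infDist x (Y : Set X) + |f x| ≤
          2 * Metric.infDist x ((Y ⊓ LinearMap.ker (f : X →ₗ[ℝ] ℝ) : Submodule ℝ X) : Set X)) ∧
      ∀ f : X →L[ℝ] ℝ, ∀ x y : X, ‖x‖ = 1 → ‖y‖ = 1 → ∀ ε > (0 : ℝ),
        ∃ z : X, ‖z‖ = 1 ∧
          Metric.infDist (z - y) (Y : Set X) + |f (z - y)| < ε ∧ 2 - ε < ‖z + x‖ := by
  constructor
  · intro f hf x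
    have h1 : Metric.infDist x (Y : Set X) ≤
        Metric.infDist x ((Y ⊓ LinearMap.ker (f : X →ₗ[ℝ] ℝ) : Submodule ℝ X) : Set X) :=
      Metric.infDist_le_infDist_of_subset
        (by exact_mod_cast inf_le_left (a := Y) (b := LinearMap.ker (f : X →ₗ[ℝ] ℝ)))
        ⟨0, Submodule.zero_mem _⟩
    have h2 : |f x| ≤ ‖f‖ * Metric.infDist x ((Y ⊓ LinearMap.ker (f : X →ₗ[ℝ] ℝ) : Submodule ℝ X) : Set X) :=
      abs_apply_le_norm_mul_infDist f _ inf_le_right x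
    rw [hf, one_mul] at h2
    linarith
  · intro f x y hx hy ε hε
    set Y₁ : Submodule ℝ X := Y ⊓ LinearMap.ker (f : X →ₗ[ℝ] ℝ) with hY₁
    have hY₁le : Y₁ ≤ Y := inf_le_left
    have hY₁ker : Y₁ ≤ LinearMap.ker (f : X →ₗ[ℝ] ℝ) := inf_le_right
    have hY₁c : IsClosed (Y₁ : Set X) := by
      have : (Y₁ : Set X) = (Y : Set X) ∩ (LinearMap.ker (f : X →ₗ[ℝ] ℝ) : Set X) := rfl
      rw [this]
      exact hYc.inter (ContinuousLinearMap.isClosed_ker f)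
    have hcodim : Y₁ = Y ∨ ∃ v ∈ Y, v ∉ Y₁ ∧ Y ≤ Y₁ ⊔ Submodule.span ℝ {v} := by
      by_cases hall : ∀ v ∈ Y, f v = 0
      · left
        apply le_antisymm hY₁le
        intro v hv
        exact ⟨hv, hall v hv⟩
      · right
        push_neg at hall
        obtain ⟨v, hvY, hfv⟩ := hall
        refine ⟨v, hvY, fun hv => hfv hv.2, fun w hw => ?_⟩
        have hmem : w - (f w / f v) • v ∈ Y₁ := by
          constructor
          · exact Y.sub_mem hw (Y.smul_mem _ hvY)
          · simp [LinearMap.mem_ker, map_sub, map_smul, div_mul_cancel₀ _ hfv]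
        have : w = (w - (f w / f v) • v) + (f w / f v) • v := by abel
        rw [this]
        exact Submodule.add_mem _ (Submodule.mem_sup_left hmem)
          (Submodule.mem_sup_right (Submodule.smul_mem _ _ (Submodule.mem_span_singleton_self v)))
    set ε' : ℝ := ε / (1 + ‖f‖) with hε'
    have hfpos : (0:ℝ) < 1 + ‖f‖ := by positivity
    have hε'pos : 0 < ε' := div_pos hε hfpos
    have hε'le : ε' ≤ ε := by
      rw [hε', div_le_iff₀ hfpos]
      nlinarith [norm_nonneg f]
    obtain ⟨z, hz, hzd, hzx⟩ := hq Y₁ hY₁le hY₁c hcodim x y hx hy ε' hε'pos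
    refine ⟨z, hz, ?_, by linarith⟩
    have h1 : Metric.infDist (z - y) (Y : Set X) ≤ Metric.infDist (z - y) (Y₁ : Set X) :=
      Metric.infDist_le_infDist_of_subset (by exact_mod_cast hY₁le) ⟨0, Submodule.zero_mem _⟩
    have h2 : |f (z - y)| ≤ ‖f‖ * Metric.infDist (z - y) (Y₁ : Set X) :=
      abs_apply_le_norm_mul_infDist f _ hY₁ker (z - y)
    have hd0 : 0 ≤ Metric.infDist (z - y) (Y₁ : Set X) := Metric.infDist_nonneg
    have : Metric.infDist (z - y) (Y : Set X) + |f (z - y)| ≤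
        (1 + ‖f‖) * Metric.infDist (z - y) (Y₁ : Set X) := by nlinarith
    have hlast : (1 + ‖f‖) * Metric.infDist (z - y) (Y₁ : Set X) < (1 + ‖f‖) * ε' :=
      mul_lt_mul_of_pos_left hzd hfpos
    rw [hε', mul_div_cancel₀ _ (ne_of_gt hfpos)] at hlast
    linarith
end

section
/- Let X be a Banach space with the Daugavet property. A closed subspace Y ⊆ X is almost rich (i.e., the quotient map q : X → X/Y is a strong Daugavet operator) if and only if for every x, y ∈ S(X) and ε > 0 the set D(x, y, ε) = {z : ‖z + x + y‖ > 2 − ε and ‖z + y‖ < 1 + ε} intersects Y. -/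
/-- Let `X` have the Daugavet property and `Y ⊆ X` be a closed subspace. Then the quotient
map `q : X → X/Y` is a strong Daugavet operator (i.e. `Y` is almost rich) iff for all
`x, y ∈ S(X)` and `ε > 0` the set `D(x,y,ε) = {z : ‖z+x+y‖ > 2-ε ∧ ‖z+y‖ < 1+ε}`
intersects `Y`. -/
theorem stmt_18 {X : Type*} [NormedAddCommGroup X] [NormedSpace ℝ X] [CompleteSpace X]
    (hX : DaugavetPt X) (Y : Submodule ℝ X) [IsClosed (Y : Set X)] :
    (∀ x y : X, ‖x‖ = 1 → ‖y‖ = 1 → ∀ ε > (0 : ℝ),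
        ∃ z : X, ‖z‖ = 1 ∧ ‖(Submodule.Quotient.mk (z - y) : X ⧸ Y)‖ < ε ∧
          2 - ε < ‖z + x‖) ↔
      ∀ x y : X, ‖x‖ = 1 → ‖y‖ = 1 → ∀ ε > (0 : ℝ),
        ∃ z ∈ Y, 2 - ε < ‖z + x + y‖ ∧ ‖z + y‖ < 1 + ε := by
  constructor
  · intro h x y hx hy ε hε
    obtain ⟨z, hz1, hz2, hz3⟩ := h x y hx hy (ε / 2) (by linarith)
    have hpos : (0 : ℝ) < ε / 2 - ‖(Submodule.Quotient.mk (z - y) : X ⧸ Y)‖ := by linarith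
    obtain ⟨m, hm, hmlt⟩ :=
      Submodule.Quotient.norm_mk_lt (Submodule.Quotient.mk (z - y) : X ⧸ Y) hpos
    have hmnorm : ‖m‖ < ε / 2 := by linarith
    have hmem : z - y - m ∈ Y := by
      have h1 : m - (z - y) ∈ Y := (Submodule.Quotient.eq Y).mp hm
      have h2 : -(m - (z - y)) ∈ Y := Y.neg_mem h1
      simpa [neg_sub] using h2
    refine ⟨z - y - m, hmem, ?_, ?_⟩
    · have he : z - y - m + x + y = z + x - m := by abel
      rw [he]
      have h3 : ‖z + x‖ - ‖m‖ ≤ ‖z + x - m‖ := norm_sub_norm_le (z + x) m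
      linarith
    · have he : z - y - m + y = z - m := by abel
      rw [he]
      calc ‖z - m‖ ≤ ‖z‖ + ‖m‖ := norm_sub_le z m
        _ < 1 + ε := by rw [hz1]; linarith
  · intro h x y hx hy ε hε
    set δ : ℝ := min (ε / 3) (1 / 2) with hδdef
    have hδpos : 0 < δ := lt_min (by linarith) (by norm_num)
    have hδε : δ ≤ ε / 3 := min_le_left _ _
    have hδhalf : δ ≤ 1 / 2 := min_le_right _ _
    obtain ⟨w, hwY, hw1, hw2⟩ := h x y hx hy δ hδpos
    set t : ℝ := ‖w + y‖ with htdef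
    have ht_lb : 1 - δ ≤ t := by
      have he : w + x + y = (w + y) + x := by abel
      have h1 : ‖w + x + y‖ ≤ ‖w + y‖ + ‖x‖ := by rw [he]; exact norm_add_le _ _
      rw [hx] at h1
      linarith
    have htpos : 0 < t := by linarith
    have htne : t ≠ 0 := ne_of_gt htpos
    have habs : |1 - t| ≤ δ := abs_sub_le_iff.mpr ⟨by linarith, by linarith⟩
    refine ⟨t⁻¹ • (w + y), ?_, ?_, ?_⟩
    · rw [norm_smul, Real.norm_eq_abs, abs_of_pos (inv_pos.mpr htpos), ← htdef]
      field_simp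
    · have hq : (Submodule.Quotient.mk (t⁻¹ • (w + y) - y) : X ⧸ Y)
          = Submodule.Quotient.mk ((t⁻¹ - 1) • y) := by
        rw [Submodule.Quotient.eq]
        have he : t⁻¹ • (w + y) - y - (t⁻¹ - 1) • y = t⁻¹ • w := by
          rw [sub_smul, smul_add, one_smul]; abel
        rw [he]
        exact Y.smul_mem _ hwY
      rw [hq]
      calc ‖(Submodule.Quotient.mk ((t⁻¹ - 1) • y) : X ⧸ Y)‖
          ≤ ‖(t⁻¹ - 1) • y‖ := Submodule.Quotient.norm_mk_le _ _
        _ = |t⁻¹ - 1| := by rw [norm_smul, Real.norm_eq_abs, hy, mul_one]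
        _ < ε := by
            have heq : |t⁻¹ - 1| * t = |1 - t| := by
              calc |t⁻¹ - 1| * t = |(t⁻¹ - 1) * t| := by
                    rw [abs_mul, abs_of_pos htpos]
                _ = |1 - t| := by congr 1; field_simp
            rw [← mul_lt_mul_iff_of_pos_right htpos, heq]
            nlinarith
    · have key : ‖(w + x + y) - (t⁻¹ • (w + y) + x)‖ = |1 - t| := by
        have he : (w + x + y) - (t⁻¹ • (w + y) + x) = (1 - t⁻¹) • (w + y) := by
          rw [sub_smul, one_smul]; abel
        rw [he, norm_smul, Real.norm_eq_abs, ← htdef]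
        calc |1 - t⁻¹| * t = |(1 - t⁻¹) * t| := by rw [abs_mul, abs_of_pos htpos]
          _ = |t - 1| := by congr 1; field_simp
          _ = |1 - t| := abs_sub_comm _ _
      have h3 : ‖w + x + y‖ - ‖t⁻¹ • (w + y) + x‖ ≤ ‖(w + x + y) - (t⁻¹ • (w + y) + x)‖ :=
        norm_sub_norm_le _ _
      rw [key] at h3
      linarith
end
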